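/- Define f₁(z) = -e^{-z} · Σ_{j=1}^∞ (z^j/j!) · j·log j for z ≥ 0. Then f₁ is twice differentiable on (0,∞) and its second derivative satisfies f₁''(z) = -e^{-z} · Σ_{t=0}^∞ (z^t/t!) · u(t), where u(t) = (t+2)log(t+2) + t·log t - 2(t+1)log(t+1). -/

import Mathlib

/-!
Write `f₁(z) = -e^{-z} S(a)(z)` with `a j = j log j` and `S(a)(z) = ∑ z^j/j! a_j` the exponential
generating function. Termwise differentiation gives `S(a)' = S(a(· + 1))`, so
`(e^{-z} S(a))' = e^{-z} S(Δa)` with `Δ` the forward difference. Applying this twice,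
`f₁'' = -e^{-z} S(Δ²a)`, and `Δ²a = u`. Termwise differentiation is justified because
`|j log j| ≤ 4^j`, a geometric bound, which survives shifts and forward differences.
-/

/-- `f₁(z) = -e^{-z} ∑_{j≥1} (z^j/j!) j log j` (the `j = 0` term vanishes). -/
noncomputable def fOne (z : ℝ) : ℝ :=
  -(Real.exp (-z) * ∑' j : ℕ, z ^ j / (j.factorial : ℝ) * ((j : ℝ) * Real.log (j : ℝ)))

/-- `u(t) = (t+2)log(t+2) + t log t - 2(t+1)log(t+1)`. -/
noncomputable def uFun (t : ℕ) : ℝ :=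
  ((t : ℝ) + 2) * Real.log ((t : ℝ) + 2) + (t : ℝ) * Real.log (t : ℝ) -
    2 * ((t : ℝ) + 1) * Real.log ((t : ℝ) + 1)

open Real fwdDiff
open scoped Nat

noncomputable def egf (a : ℕ → ℝ) (x : ℝ) : ℝ :=
  ∑' j : ℕ, x ^ j / (j ! : ℝ) * a j

section GeometricBound

variable {a : ℕ → ℝ} {C K : ℝ}

lemma norm_egf_term_le (ha : ∀ j, |a j| ≤ C * K ^ j) {x R : ℝ} (hxR : |x| ≤ R) (j : ℕ) :
    ‖x ^ j / (j ! : ℝ) * a j‖ ≤ C * ((R * K) ^ j / j !) := by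
  rw [norm_mul, norm_div, norm_pow, Real.norm_eq_abs, Real.norm_eq_abs, Nat.abs_cast]
  calc |x| ^ j / j ! * |a j| ≤ R ^ j / j ! * (C * K ^ j) := by
        have hR : 0 ≤ R := (abs_nonneg x).trans hxR
        gcongr
        exact ha j
    _ = C * ((R * K) ^ j / j !) := by ring

lemma summable_egf (ha : ∀ j, |a j| ≤ C * K ^ j) (x : ℝ) :
    Summable fun j : ℕ => x ^ j / (j ! : ℝ) * a j :=
  .of_norm_bounded ((Real.summable_pow_div_factorial _).mul_left C)
    (norm_egf_term_le ha le_rfl)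

lemma abs_shift_le (ha : ∀ j, |a j| ≤ C * K ^ j) (j : ℕ) : |a (j + 1)| ≤ C * K * K ^ j :=
  (ha (j + 1)).trans_eq (by ring)

lemma abs_fwdDiff_le (ha : ∀ j, |a j| ≤ C * K ^ j) (j : ℕ) :
    |Δ_[1] a j| ≤ C * (K + 1) * K ^ j :=
  calc |a (j + 1) - a j| ≤ |a (j + 1)| + |a j| := abs_sub _ _
    _ ≤ C * K * K ^ j + C * K ^ j := add_le_add (abs_shift_le ha j) (ha j)
    _ = C * (K + 1) * K ^ j := by ring

lemma egf_eq_zero_add (ha : ∀ j, |a j| ≤ C * K ^ j) (x : ℝ) :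
    egf a x = a 0 + ∑' t : ℕ, x ^ (t + 1) / ((t + 1) ! : ℝ) * a (t + 1) := by
  rw [egf, (summable_egf ha x).tsum_eq_zero_add]
  simp

lemma hasDerivAt_pow_succ_div_factorial (t : ℕ) (y : ℝ) :
    HasDerivAt (fun x : ℝ => x ^ (t + 1) / ((t + 1) ! : ℝ)) (y ^ t / (t ! : ℝ)) y := by
  refine ((hasDerivAt_pow (t + 1) y).div_const ((t + 1) ! : ℝ)).congr_deriv ?_
  rw [Nat.factorial_succ]
  push_cast
  field_simp

theorem hasDerivAt_egf (ha : ∀ j, |a j| ≤ C * K ^ j) (x : ℝ) :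
    HasDerivAt (egf a) (egf (fun j => a (j + 1)) x) x := by
  set R := |x| + 1
  have hx : x ∈ Metric.ball (0 : ℝ) R := by simp [R]
  have hterm (t : ℕ) (y : ℝ) (_ : y ∈ Metric.ball (0 : ℝ) R) :
      HasDerivAt (fun x : ℝ => x ^ (t + 1) / ((t + 1) ! : ℝ) * a (t + 1))
        (y ^ t / (t ! : ℝ) * a (t + 1)) y :=
    (hasDerivAt_pow_succ_div_factorial t y).mul_const _
  have hbound (t : ℕ) (y : ℝ) (hy : y ∈ Metric.ball (0 : ℝ) R) :
      ‖y ^ t / (t ! : ℝ) * a (t + 1)‖ ≤ C * K * ((R * K) ^ t / t !) := by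
    refine norm_egf_term_le (abs_shift_le ha) ?_ t
    simpa using (mem_ball_zero_iff.mp hy).le
  have hsum := hasDerivAt_tsum_of_isPreconnected
    ((Real.summable_pow_div_factorial (R * K)).mul_left (C * K)) Metric.isOpen_ball
    (convex_ball 0 R).isPreconnected hterm hbound hx
    ((summable_nat_add_iff 1).mpr (summable_egf ha x)) hx
  rw [funext (egf_eq_zero_add ha)]
  exact hsum.const_add (a 0)

lemma egf_fwdDiff (ha : ∀ j, |a j| ≤ C * K ^ j) (x : ℝ) :
    egf (Δ_[1] a) x = egf (fun j => a (j + 1)) x - egf a x := by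
  simp only [egf, fwdDiff, mul_sub]
  exact (summable_egf (abs_shift_le ha) x).tsum_sub (summable_egf ha x)

theorem hasDerivAt_exp_neg_mul_egf (ha : ∀ j, |a j| ≤ C * K ^ j) (x : ℝ) :
    HasDerivAt (fun y => exp (-y) * egf a y) (exp (-x) * egf (Δ_[1] a) x) x := by
  have hexp : HasDerivAt (fun y => exp (-y)) (-exp (-x)) x := by
    simpa using (hasDerivAt_neg x).exp
  refine (hexp.mul (hasDerivAt_egf ha x)).congr_deriv ?_
  rw [egf_fwdDiff ha]
  ring

end GeometricBound

lemma abs_natCast_mul_log_le (j : ℕ) : |(j : ℝ) * log j| ≤ 4 ^ j := by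
  have hlog : |log (j : ℝ)| ≤ j := by
    rcases j.eq_zero_or_pos with rfl | hj
    · simp
    · rw [abs_of_nonneg (log_nonneg (by exact_mod_cast hj))]
      linarith [log_le_sub_one_of_pos (Nat.cast_pos.mpr hj)]
  have hj : (j : ℝ) ≤ 2 ^ j := by exact_mod_cast (Nat.lt_two_pow_self).le
  calc |(j : ℝ) * log j| = j * |log (j : ℝ)| := by rw [abs_mul, Nat.abs_cast]
    _ ≤ 2 ^ j * 2 ^ j := by gcongr; linarith
    _ = 4 ^ j := by rw [← mul_pow]; norm_num

lemma fwdDiff_fwdDiff_natCast_mul_log (t : ℕ) :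
    Δ_[1] (Δ_[1] fun j : ℕ => (j : ℝ) * log j) t = uFun t := by
  simp only [fwdDiff, uFun]
  push_cast
  ring_nf

theorem stmt_3_general (z : ℝ) :
    DifferentiableAt ℝ fOne z ∧ DifferentiableAt ℝ (deriv fOne) z ∧
      deriv (deriv fOne) z =
        -(Real.exp (-z) * ∑' t : ℕ, z ^ t / (t.factorial : ℝ) * uFun t) := by
  set a : ℕ → ℝ := fun j => j * log j
  have ha (j : ℕ) : |a j| ≤ 1 * 4 ^ j :=
    (abs_natCast_mul_log_le j).trans_eq (one_mul _).symm
  have hfOne : fOne = fun y => -(exp (-y) * egf a y) := rfl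
  have hderiv (y : ℝ) : HasDerivAt fOne (-(exp (-y) * egf (Δ_[1] a) y)) y :=
    hfOne ▸ (hasDerivAt_exp_neg_mul_egf ha y).neg
  have hderiv2 (y : ℝ) :
      HasDerivAt (deriv fOne) (-(exp (-y) * egf (Δ_[1] (Δ_[1] a)) y)) y := by
    rw [funext fun y => (hderiv y).deriv]
    exact (hasDerivAt_exp_neg_mul_egf (abs_fwdDiff_le ha) y).neg
  refine ⟨(hderiv z).differentiableAt, (hderiv2 z).differentiableAt, ?_⟩
  rw [(hderiv2 z).deriv, egf, funext fwdDiff_fwdDiff_natCast_mul_log]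

theorem stmt_3 (z : ℝ) (hz : 0 < z) :
    DifferentiableAt ℝ fOne z ∧ DifferentiableAt ℝ (deriv fOne) z ∧
      deriv (deriv fOne) z =
        -(Real.exp (-z) * ∑' t : ℕ, z ^ t / (t.factorial : ℝ) * uFun t) :=
  stmt_3_general z
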